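/- Let (X,d,⪯) be an ordered metric space and E an O̅-complete subset of X. Let T, S be self-maps of X with T(X) ⊆ E ⊆ S(X) and T S-increasing. Suppose there exists a continuous half-comparison function ρ such that d(Tx,Ty) ≤ ρ(max{d(Sx,Sy), d(Sx,Tx), d(Sy,Ty), d(Sx,Ty), d(Sy,Tx)}) for all x, y ∈ X with Sx ⪯ Sy. If there exists x₀ ∈ X with Sx₀ ⪯ Tx₀ and (E,d,⪯) is I-regular relative to S, then (T,S) has a coincidence point. If moreover (T,S) is weakly compatible and C(T,S) is (T,S)-directed, then (T,S) has a unique common fixed point, and for any such x₀ every T-S-sequence {Txₙ} with initial point x₀ converges to it. -/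

import Mathlib

open Filter Topology

/-- A comparison function: `φ : [0,∞) → [0,∞)` increasing with `φ^[n] t → 0` for all `t > 0`. -/
def IsComparisonFn (φ : ℝ → ℝ) : Prop :=
  (∀ t, 0 ≤ t → 0 ≤ φ t) ∧
  (∀ s t, 0 ≤ s → s ≤ t → φ s ≤ φ t) ∧
  (∀ t, 0 < t → Tendsto (fun n => φ^[n] t) atTop (𝓝 0))

/-- A half-comparison function: a comparison function `ρ` such that `t ↦ ρ (2 t)`
is also a comparison function. -/
def IsHalfComparisonFn (ρ : ℝ → ℝ) : Prop :=
  IsComparisonFn ρ ∧ IsComparisonFn (fun t => ρ (2 * t))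

/-- Two elements are comparable in a preorder. -/
def CmpRel {X : Type*} [Preorder X] (a b : X) : Prop := a ≤ b ∨ b ≤ a

/-- `T` is `S`-increasing. -/
def SIncreasing {X : Type*} [Preorder X] (T S : X → X) : Prop :=
  ∀ x y, S x ≤ S y → T x ≤ T y

/-- `E` is `O̅`-complete: every increasing Cauchy sequence in `E` converges in `E`. -/
def OBarComplete {X : Type*} [MetricSpace X] [Preorder X] (E : Set X) : Prop :=
  ∀ u : ℕ → X, (∀ n, u n ∈ E) → Monotone u → CauchySeq u → ∃ z ∈ E, Tendsto u atTop (𝓝 z)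

/-- `(E,d,⪯)` is I-regular relative to `S`: every increasing sequence `{S xₙ}` in `E`
converging to some `S z` admits a subsequence whose terms are all comparable with `S z`,
and moreover `S z ⪯ S (S z)`. -/
def IRegularOn {X : Type*} [MetricSpace X] [Preorder X] (E : Set X) (S : X → X) : Prop :=
  ∀ (x : ℕ → X) (z : X), (∀ n, S (x n) ∈ E) → Monotone (fun n => S (x n)) →
    Tendsto (fun n => S (x n)) atTop (𝓝 (S z)) →
    ((∃ k : ℕ → ℕ, StrictMono k ∧ ∀ n, CmpRel (S (x (k n))) (S z)) ∧ S z ≤ S (S z))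

/-- The pair `(T,S)` is weakly compatible. -/
def WeaklyCompatible {X : Type*} (T S : X → X) : Prop :=
  ∀ x, S x = T x → S (T x) = T (S x)

/-- The set of coincidence points `C(T,S)` is `(T,S)`-directed. -/
def CoincTSDirected {X : Type*} [Preorder X] (T S : X → X) : Prop :=
  ∀ x y, S x = T x → S y = T y → ∃ z, CmpRel (T x) (S z) ∧ CmpRel (T y) (S z)

/-- The set of coincidence points `C(T,S)` is totally ordered by `⪯`. -/
def CoincTotallyOrdered {X : Type*} [Preorder X] (T S : X → X) : Prop :=
  ∀ x y, S x = T x → S y = T y → CmpRel x y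

/-- `T` is `(S,O̅)`-continuous. -/
def SOBarContinuous {X : Type*} [MetricSpace X] [Preorder X] (T S : X → X) : Prop :=
  ∀ (x : ℕ → X) (a : X), Monotone (fun n => S (x n)) →
    Tendsto (fun n => S (x n)) atTop (𝓝 (S a)) →
    Tendsto (fun n => T (x n)) atTop (𝓝 (T a))

/-- A self-map `f` is `O̅`-continuous. -/
def OBarContinuous {X : Type*} [MetricSpace X] [Preorder X] (f : X → X) : Prop :=
  ∀ (x : ℕ → X) (a : X), Monotone x → Tendsto x atTop (𝓝 a) →
    Tendsto (fun n => f (x n)) atTop (𝓝 (f a))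

/-- The pair `(T,S)` is `O̅`-compatible. -/
def OBarCompatible {X : Type*} [MetricSpace X] [Preorder X] (T S : X → X) : Prop :=
  ∀ (x : ℕ → X) (z : X), Monotone (fun n => S (x n)) → Monotone (fun n => T (x n)) →
    Tendsto (fun n => S (x n)) atTop (𝓝 z) → Tendsto (fun n => T (x n)) atTop (𝓝 z) →
    Tendsto (fun n => dist (S (T (x n))) (T (S (x n)))) atTop (𝓝 0)

/-- A comparable mapping maps comparable elements to comparable elements. -/
def ComparableMap {X : Type*} [Preorder X] (f : X → X) : Prop :=
  ∀ x y, CmpRel x y → CmpRel (f x) (f y)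

/-- Continuity of a 6-variable function on `[0,∞)⁶`. -/
def ContOnNonneg6 (F : ℝ → ℝ → ℝ → ℝ → ℝ → ℝ → ℝ) : Prop :=
  ContinuousOn
    (fun p : ℝ × ℝ × ℝ × ℝ × ℝ × ℝ => F p.1 p.2.1 p.2.2.1 p.2.2.2.1 p.2.2.2.2.1 p.2.2.2.2.2)
    (Set.Ici 0 ×ˢ Set.Ici 0 ×ˢ Set.Ici 0 ×ˢ Set.Ici 0 ×ˢ Set.Ici 0 ×ˢ Set.Ici 0)

/-- Condition (F1a): `F` is decreasing in the fifth variable and there is a comparison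
function `φ` such that `F(u,v,v,u,u+v,0) ≤ 0` implies `u ≤ φ v` for `u, v ≥ 0`. -/
def CondF1a (F : ℝ → ℝ → ℝ → ℝ → ℝ → ℝ → ℝ) : Prop :=
  (∀ t1 t2 t3 t4 t6, 0 ≤ t1 → 0 ≤ t2 → 0 ≤ t3 → 0 ≤ t4 → 0 ≤ t6 →
      AntitoneOn (fun t5 => F t1 t2 t3 t4 t5 t6) (Set.Ici 0)) ∧
  (∃ φ, IsComparisonFn φ ∧ ∀ u v, 0 ≤ u → 0 ≤ v → F u v v u (u + v) 0 ≤ 0 → u ≤ φ v)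

/-- Condition (F1b): `F` is decreasing in the fourth variable and there is a comparison
function `φ` such that `F(u,v,0,u+v,u,v) ≤ 0` implies `u ≤ φ v` for `u, v ≥ 0`. -/
def CondF1b (F : ℝ → ℝ → ℝ → ℝ → ℝ → ℝ → ℝ) : Prop :=
  (∀ t1 t2 t3 t5 t6, 0 ≤ t1 → 0 ≤ t2 → 0 ≤ t3 → 0 ≤ t5 → 0 ≤ t6 →
      AntitoneOn (fun t4 => F t1 t2 t3 t4 t5 t6) (Set.Ici 0)) ∧
  (∃ φ, IsComparisonFn φ ∧ ∀ u v, 0 ≤ u → 0 ≤ v → F u v 0 (u + v) u v ≤ 0 → u ≤ φ v)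

/-- Condition (F1c): `F` is decreasing in the third variable and there is a comparison
function `φ` such that `F(u,v,u+v,0,v,u) ≤ 0` implies `u ≤ φ v` for `u, v ≥ 0`. -/
def CondF1c (F : ℝ → ℝ → ℝ → ℝ → ℝ → ℝ → ℝ) : Prop :=
  (∀ t1 t2 t4 t5 t6, 0 ≤ t1 → 0 ≤ t2 → 0 ≤ t4 → 0 ≤ t5 → 0 ≤ t6 →
      AntitoneOn (fun t3 => F t1 t2 t3 t4 t5 t6) (Set.Ici 0)) ∧
  (∃ φ, IsComparisonFn φ ∧ ∀ u v, 0 ≤ u → 0 ≤ v → F u v (u + v) 0 v u ≤ 0 → u ≤ φ v)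

/-- Condition (F2): `F(u,u,0,0,u,u) > 0` for all `u > 0`. -/
def CondF2 (F : ℝ → ℝ → ℝ → ℝ → ℝ → ℝ → ℝ) : Prop :=
  ∀ u, 0 < u → 0 < F u u 0 0 u u


/-! Along a T-S-sequence started at `x₀` the points `S xₙ` increase, so the contraction applies
to consecutive terms. The half-comparison property turns it into `dₙ₊₁ ≤ ρ (2 dₙ)` for
`dₙ = d(S xₙ, S xₙ₊₁)`: if `dₙ₊₁ > dₙ` the bound would read `dₙ₊₁ ≤ ρ (2 dₙ₊₁) < dₙ₊₁`. If
`S xₙ` were not Cauchy, stopping at the first exit from an `ε`-ball and using continuity of `ρ`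
would give `ε ≤ ρ ε`. O̅-completeness then gives a limit `S p`; I-regularity lets one pass to the
limit in the contraction along terms comparable with `S p`, so `d(S p, T p) ≤ ρ (d(S p, T p))` and
`p` is a coincidence point. Weak compatibility and `S p ⪯ S (S p)` make `S p` a common fixed
point. For uniqueness, the T-S-sequence started at a point given by directedness converges to
`S a` for every coincidence point `a`. -/

namespace IsComparisonFn

variable {φ : ℝ → ℝ}

lemma mono (hφ : IsComparisonFn φ) {s t : ℝ} (hs : 0 ≤ s) (hst : s ≤ t) : φ s ≤ φ t :=
  hφ.2.1 s t hs hst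

lemma apply_lt (hφ : IsComparisonFn φ) {t : ℝ} (ht : 0 < t) : φ t < t := by
  by_contra! hle
  have hiter : ∀ n, t ≤ φ^[n] t := by
    intro n
    induction n with
    | zero => exact le_rfl
    | succ n ih => rw [Function.iterate_succ_apply']; exact hle.trans (hφ.mono ht.le ih)
  linarith [ge_of_tendsto' (hφ.2.2 t ht) hiter]

lemma apply_zero (hφ : IsComparisonFn φ) : φ 0 = 0 :=
  le_antisymm
    (le_of_forall_pos_le_add fun ε hε => by linarith [hφ.mono le_rfl hε.le, hφ.apply_lt hε])
    (hφ.1 0 le_rfl)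

lemma apply_le (hφ : IsComparisonFn φ) {t : ℝ} (ht : 0 ≤ t) : φ t ≤ t := by
  rcases ht.eq_or_lt with rfl | ht
  · exact hφ.apply_zero.le
  · exact (hφ.apply_lt ht).le

lemma eq_zero_of_le_apply (hφ : IsComparisonFn φ) {t : ℝ} (ht : 0 ≤ t) (h : t ≤ φ t) :
    t = 0 := by
  by_contra hne
  exact (hφ.apply_lt (ht.lt_of_ne' hne)).not_ge h

lemma tendsto_zero_of_le_apply (hφ : IsComparisonFn φ) {a : ℕ → ℝ} (ha : ∀ n, 0 ≤ a n)
    (h : ∀ n, a (n + 1) ≤ φ (a n)) : Tendsto a atTop (𝓝 0) := by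
  have hbound : ∀ n, a n ≤ φ^[n] (a 0) := by
    intro n
    induction n with
    | zero => exact le_rfl
    | succ n ih => rw [Function.iterate_succ_apply']; exact (h n).trans (hφ.mono (ha n) ih)
  refine squeeze_zero ha hbound ?_
  rcases (ha 0).eq_or_lt with h0 | h0
  · simp only [← h0, Function.iterate_fixed hφ.apply_zero]
    exact tendsto_const_nhds
  · exact hφ.2.2 _ h0

lemma eq_zero_of_sub_le_apply_add (hφ : IsComparisonFn φ) (hc : ContinuousOn φ (Set.Ici 0))
    {r : ℝ} (hr : 0 ≤ r) {e : ℕ → ℝ} (he0 : ∀ n, 0 ≤ e n) (he : Tendsto e atTop (𝓝 0))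
    (h : ∀ n, r - e n ≤ φ (r + e n)) : r = 0 := by
  have hlow : Tendsto (fun n => r - e n) atTop (𝓝 r) := by
    simpa using tendsto_const_nhds.sub he
  have hre : Tendsto (fun n => r + e n) atTop (𝓝[Set.Ici 0] r) :=
    tendsto_nhdsWithin_of_tendsto_nhds_of_eventually_within _
      (by simpa using tendsto_const_nhds.add he)
      (Eventually.of_forall fun n => Set.mem_Ici.2 (add_nonneg hr (he0 n)))
  exact hφ.eq_zero_of_le_apply hr
    (le_of_tendsto_of_tendsto' hlow ((hc r hr).tendsto.comp hre) h)

end IsComparisonFn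

lemma IsHalfComparisonFn.le_apply_two_mul {ρ : ℝ → ℝ} (hρ : IsHalfComparisonFn ρ)
    {a b m : ℝ} (ha : 0 ≤ a) (hm : 0 ≤ m) (hb : b ≤ ρ m) (hmab : m ≤ a + b) :
    b ≤ ρ (2 * a) := by
  rcases le_or_gt b a with hba | hab
  · exact hb.trans (hρ.1.mono hm (by linarith))
  · have hlt : ρ (2 * b) < b := hρ.2.apply_lt (ha.trans_lt hab)
    linarith [hρ.1.mono hm (show m ≤ 2 * b by linarith)]

lemma exists_dist_lt_le_dist_succ {α : Type*} [PseudoMetricSpace α] (u : ℕ → α) {ε : ℝ}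
    (hε : 0 < ε) {q m : ℕ} (hqm : q ≤ m) (hm : ε ≤ dist (u q) (u m)) :
    ∃ k, q ≤ k ∧ dist (u q) (u k) < ε ∧ ε ≤ dist (u q) (u (k + 1)) := by
  induction m, hqm using Nat.le_induction with
  | base => rw [dist_self] at hm; linarith
  | succ m hqm ih =>
    by_cases hfar : ε ≤ dist (u q) (u m)
    · exact ih hfar
    · exact ⟨m, hqm, not_le.1 hfar, hm⟩

section TSSequence

variable {X : Type*} (T S : X → X)

def IsTSSeq (x : ℕ → X) : Prop :=
  ∀ n, S (x (n + 1)) = T (x n)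

variable {T S}

lemma exists_isTSSeq (hTS : ∀ x, T x ∈ Set.range S) (x₀ : X) :
    ∃ x : ℕ → X, x 0 = x₀ ∧ IsTSSeq T S x := by
  choose g hg using hTS
  exact ⟨fun n => g^[n] x₀, rfl, fun n => by simp only [Function.iterate_succ_apply', hg]⟩

lemma IsTSSeq.monotone [Preorder X] {x : ℕ → X} (hx : IsTSSeq T S x)
    (hTS : SIncreasing T S) (h0 : S (x 0) ≤ T (x 0)) : Monotone fun n => S (x n) := by
  refine monotone_nat_of_le_succ fun n => ?_
  induction n with
  | zero => rw [hx 0]; exact h0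
  | succ n ih => rw [hx n, hx (n + 1)]; exact hTS _ _ ih

end TSSequence

section QuasiContraction

variable {X : Type*} [PseudoMetricSpace X] (T S : X → X)

def quasiMax (x y : X) : ℝ :=
  max (dist (S x) (S y)) (max (dist (S x) (T x)) (max (dist (S y) (T y))
    (max (dist (S x) (T y)) (dist (S y) (T x)))))

lemma quasiMax_nonneg (x y : X) : 0 ≤ quasiMax T S x y :=
  dist_nonneg.trans (le_max_left _ _)

lemma quasiMax_comm (x y : X) : quasiMax T S x y = quasiMax T S y x := by
  unfold quasiMax
  rw [dist_comm (S x) (S y)]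
  ac_rfl

variable {T S} {x y : X}

lemma quasiMax_le {b : ℝ} (h₁ : dist (S x) (S y) ≤ b) (h₂ : dist (S x) (T x) ≤ b)
    (h₃ : dist (S y) (T y) ≤ b) (h₄ : dist (S x) (T y) ≤ b) (h₅ : dist (S y) (T x) ≤ b) :
    quasiMax T S x y ≤ b :=
  max_le h₁ (max_le h₂ (max_le h₃ (max_le h₄ h₅)))

lemma quasiMax_le_of_S_eq_T (hyx : S y = T x) :
    quasiMax T S x y ≤ dist (S x) (S y) + dist (T x) (T y) := by
  unfold quasiMax
  rw [hyx, dist_self]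
  refine max_le ?_ (max_le ?_ (max_le ?_ (max_le (dist_triangle _ _ _) ?_))) <;>
    linarith [dist_nonneg (x := S x) (y := T x), dist_nonneg (x := T x) (y := T y)]

lemma quasiMax_le_of_coincidence (hx : S x = T x) :
    quasiMax T S x y ≤ dist (S x) (S y) + dist (T x) (T y) := by
  unfold quasiMax
  rw [hx, dist_self]
  refine max_le ?_ (max_le ?_ (max_le ?_ (max_le ?_ ?_))) <;>
    linarith [dist_nonneg (x := T x) (y := S y), dist_nonneg (x := T x) (y := T y),
      dist_comm (S y) (T x), dist_triangle (S y) (T x) (T y)]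

end QuasiContraction

section OrderedQuasiContraction

variable {X : Type*} [PseudoMetricSpace X] [Preorder X]

def IsOrderedQuasiContraction (T S : X → X) (ρ : ℝ → ℝ) : Prop :=
  ∀ x y, S x ≤ S y → dist (T x) (T y) ≤ ρ (quasiMax T S x y)

namespace IsOrderedQuasiContraction

variable {T S : X → X} {ρ : ℝ → ℝ} {x y : X}

lemma dist_le (h : IsOrderedQuasiContraction T S ρ) (hxy : CmpRel (S x) (S y)) :
    dist (T x) (T y) ≤ ρ (quasiMax T S x y) := by
  rcases hxy with hxy | hyx
  · exact h x y hxy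
  · rw [dist_comm, quasiMax_comm]
    exact h y x hyx

lemma dist_sub_le_apply_add (h : IsOrderedQuasiContraction T S ρ) (hρ : IsComparisonFn ρ)
    (hxy : CmpRel (S x) (S y)) :
    dist (S x) (S y) - (dist (S x) (T x) + dist (S y) (T y)) ≤
      ρ (dist (S x) (S y) + (dist (S x) (T x) + dist (S y) (T y))) := by
  have hM : quasiMax T S x y ≤ dist (S x) (S y) + (dist (S x) (T x) + dist (S y) (T y)) := by
    refine quasiMax_le ?_ ?_ ?_ ?_ ?_ <;>
      linarith [dist_nonneg (x := S x) (y := S y), dist_nonneg (x := S x) (y := T x),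
        dist_nonneg (x := S y) (y := T y), dist_triangle (S x) (S y) (T y),
        dist_triangle (S y) (S x) (T x), dist_comm (S x) (S y)]
  calc _ ≤ dist (T x) (T y) := by
        linarith [dist_triangle4 (S x) (T x) (T y) (S y), dist_comm (S y) (T y)]
    _ ≤ ρ (quasiMax T S x y) := h.dist_le hxy
    _ ≤ _ := hρ.mono (quasiMax_nonneg T S x y) hM

lemma dist_S_T_sub_le_apply_add (h : IsOrderedQuasiContraction T S ρ) (hρ : IsComparisonFn ρ)
    (hxy : CmpRel (S x) (S y)) :
    dist (S y) (T y) - (dist (S x) (S y) + dist (S x) (T x)) ≤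
      ρ (dist (S y) (T y) + (dist (S x) (S y) + dist (S x) (T x))) := by
  have hM : quasiMax T S x y ≤ dist (S y) (T y) + (dist (S x) (S y) + dist (S x) (T x)) := by
    refine quasiMax_le ?_ ?_ ?_ ?_ ?_ <;>
      linarith [dist_nonneg (x := S x) (y := S y), dist_nonneg (x := S x) (y := T x),
        dist_nonneg (x := S y) (y := T y), dist_triangle (S x) (S y) (T y),
        dist_triangle (S y) (S x) (T x), dist_comm (S x) (S y)]
  calc _ ≤ dist (T x) (T y) := by
        linarith [dist_triangle4 (S y) (S x) (T x) (T y), dist_comm (S x) (S y)]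
    _ ≤ ρ (quasiMax T S x y) := h.dist_le hxy
    _ ≤ _ := hρ.mono (quasiMax_nonneg T S x y) hM

lemma dist_le_apply_two_mul (h : IsOrderedQuasiContraction T S ρ) (hρ : IsHalfComparisonFn ρ)
    (hxy : CmpRel (S x) (S y))
    (hM : quasiMax T S x y ≤ dist (S x) (S y) + dist (T x) (T y)) :
    dist (T x) (T y) ≤ ρ (2 * dist (S x) (S y)) :=
  hρ.le_apply_two_mul dist_nonneg (quasiMax_nonneg T S x y) (h.dist_le hxy) hM

variable {x : ℕ → X}

lemma dist_succ_le (h : IsOrderedQuasiContraction T S ρ) (hρ : IsHalfComparisonFn ρ)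
    (hx : IsTSSeq T S x) (hmono : Monotone fun n => S (x n)) (n : ℕ) :
    dist (S (x (n + 1))) (S (x (n + 1 + 1))) ≤ ρ (2 * dist (S (x n)) (S (x (n + 1)))) := by
  have := h.dist_le_apply_two_mul hρ (Or.inl (hmono n.le_succ)) (quasiMax_le_of_S_eq_T (hx n))
  rwa [← hx n, ← hx (n + 1)] at this

lemma tendsto_dist_succ (h : IsOrderedQuasiContraction T S ρ) (hρ : IsHalfComparisonFn ρ)
    (hx : IsTSSeq T S x) (hmono : Monotone fun n => S (x n)) :
    Tendsto (fun n => dist (S (x n)) (S (x (n + 1)))) atTop (𝓝 0) :=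
  hρ.2.tendsto_zero_of_le_apply (fun _ => dist_nonneg) (h.dist_succ_le hρ hx hmono)

lemma antitone_dist_succ (h : IsOrderedQuasiContraction T S ρ) (hρ : IsHalfComparisonFn ρ)
    (hx : IsTSSeq T S x) (hmono : Monotone fun n => S (x n)) :
    Antitone fun n => dist (S (x n)) (S (x (n + 1))) :=
  antitone_nat_of_succ_le fun n => (h.dist_succ_le hρ hx hmono n).trans (hρ.2.apply_le dist_nonneg)

lemma cauchySeq (h : IsOrderedQuasiContraction T S ρ) (hρ : IsHalfComparisonFn ρ)
    (hρc : ContinuousOn ρ (Set.Ici 0)) (hx : IsTSSeq T S x)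
    (hmono : Monotone fun n => S (x n)) : CauchySeq fun n => S (x n) := by
  set d := fun n => dist (S (x n)) (S (x (n + 1)))
  have hd_anti : Antitone d := h.antitone_dist_succ hρ hx hmono
  refine Metric.cauchySeq_iff'.2 fun ε hε => ?_
  by_contra! hfar
  suffices hstep : ∀ N, ε - 3 * d N ≤ ρ (ε + 3 * d N) from
    hε.ne' (hρ.1.eq_zero_of_sub_le_apply_add hρc hε.le (fun N => by positivity)
      (by simpa using (h.tendsto_dist_succ hρ hx hmono).const_mul 3) hstep)
  intro N
  obtain ⟨m, hNm, hm⟩ := hfar N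
  obtain ⟨k, hNk, hk, hk₁⟩ :=
    exists_dist_lt_le_dist_succ (fun n => S (x n)) hε hNm (by rwa [dist_comm])
  have hkey := h.dist_sub_le_apply_add hρ.1 (Or.inl (hmono (hNk.trans k.le_succ)))
  rw [← hx N, ← hx (k + 1)] at hkey
  have hdk : d k ≤ d N := hd_anti hNk
  have hdk₁ : d (k + 1) ≤ d N := hd_anti (hNk.trans k.le_succ)
  have htri := dist_triangle (S (x N)) (S (x k)) (S (x (k + 1)))
  calc ε - 3 * d N ≤ dist (S (x N)) (S (x (k + 1))) - (d N + d (k + 1)) := by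
        linarith [dist_nonneg (x := S (x (k + 1))) (y := S (x (k + 1 + 1)))]
    _ ≤ _ := hkey
    _ ≤ ρ (ε + 3 * d N) := hρ.1.mono (by positivity) (by linarith)

theorem tendsto_of_coincidence (h : IsOrderedQuasiContraction T S ρ)
    (hρ : IsHalfComparisonFn ρ) (hTS : SIncreasing T S) {a : X} (ha : S a = T a)
    {c : ℕ → X} (hc : IsTSSeq T S c) (hc₀ : CmpRel (T a) (S (c 0))) :
    Tendsto (fun n => S (c n)) atTop (𝓝 (S a)) := by
  have hcmp : ∀ n, CmpRel (S a) (S (c n)) := by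
    intro n
    induction n with
    | zero => rwa [ha]
    | succ n ih => rw [hc n, ha]; exact ih.imp (hTS _ _) (hTS _ _)
  have hstep : ∀ n, dist (S a) (S (c (n + 1))) ≤ ρ (2 * dist (S a) (S (c n))) := by
    intro n
    have := h.dist_le_apply_two_mul hρ (hcmp n) (quasiMax_le_of_coincidence ha)
    rwa [← hc n, ← ha] at this
  rw [tendsto_iff_dist_tendsto_zero]
  simp only [dist_comm (S (c _))]
  exact hρ.2.tendsto_zero_of_le_apply (fun _ => dist_nonneg) hstep

end IsOrderedQuasiContraction

end OrderedQuasiContraction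

section Coincidence

variable {X : Type*} [MetricSpace X] [Preorder X] {T S : X → X} {ρ : ℝ → ℝ}

namespace IsOrderedQuasiContraction

theorem exists_coincidence_of_isTSSeq {E : Set X} (hTE : ∀ x, T x ∈ E)
    (hES : E ⊆ Set.range S) (hTS : SIncreasing T S) (h : IsOrderedQuasiContraction T S ρ)
    (hρ : IsHalfComparisonFn ρ) (hρc : ContinuousOn ρ (Set.Ici 0)) (hE : OBarComplete E)
    (hreg : IRegularOn E S) {x : ℕ → X} (hx : IsTSSeq T S x) (h0 : S (x 0) ≤ T (x 0)) :
    ∃ p, S p = T p ∧ S p ≤ S (S p) ∧ Tendsto (fun n => T (x n)) atTop (𝓝 (S p)) := by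
  have hmono := hx.monotone hTS h0
  have hshift : (fun n => S (x (n + 1))) = fun n => T (x n) := funext hx
  have hcauchy : CauchySeq fun n => T (x n) :=
    hshift ▸ (h.cauchySeq hρ hρc hx hmono).comp_tendsto (tendsto_add_atTop_nat 1)
  obtain ⟨z, hzE, hz⟩ := hE _ (fun n => hTE (x n)) (fun m n hmn => hTS _ _ (hmono hmn)) hcauchy
  obtain ⟨p, rfl⟩ := hES hzE
  obtain ⟨⟨k, hk, hkp⟩, hpp⟩ := hreg (fun n => x (n + 1)) p (fun n => hx n ▸ hTE (x n))
    (fun m n hmn => hmono (Nat.add_le_add_right hmn 1)) (hshift ▸ hz)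
  refine ⟨p, ?_, hpp, hz⟩
  have hSy : Tendsto (fun n => S (x (k n + 1))) atTop (𝓝 (S p)) :=
    (hshift ▸ hz).comp hk.tendsto_atTop
  have hTy : Tendsto (fun n => T (x (k n + 1))) atTop (𝓝 (S p)) :=
    hz.comp ((tendsto_add_atTop_nat 1).comp hk.tendsto_atTop)
  have he : Tendsto (fun n => dist (S (x (k n + 1))) (S p) +
      dist (S (x (k n + 1))) (T (x (k n + 1)))) atTop (𝓝 0) := by
    simpa using (hSy.dist (tendsto_const_nhds (x := S p))).add (hSy.dist hTy)
  exact dist_eq_zero.1 (hρ.1.eq_zero_of_sub_le_apply_add hρc dist_nonneg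
    (fun n => by positivity) he fun n => h.dist_S_T_sub_le_apply_add hρ.1 (hkp n))

theorem fixed_of_coincidence (h : IsOrderedQuasiContraction T S ρ) (hρ : IsComparisonFn ρ)
    (hwc : WeaklyCompatible T S) {p : X} (hp : S p = T p) (hpp : S p ≤ S (S p)) :
    S (S p) = S p ∧ T (S p) = S p := by
  have hz : S (S p) = T (S p) := (congrArg S hp).trans (hwc p hp)
  have hkey := h.dist_sub_le_apply_add hρ (Or.inl hpp)
  rw [← hp, ← hz, dist_self, dist_self, add_zero, add_zero, sub_zero] at hkey
  have hfix : S p = S (S p) := dist_eq_zero.1 (hρ.eq_zero_of_le_apply dist_nonneg hkey)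
  exact ⟨hfix.symm, hz.symm.trans hfix.symm⟩

theorem S_eq_of_coincTSDirected (h : IsOrderedQuasiContraction T S ρ)
    (hρ : IsHalfComparisonFn ρ) (hTS : SIncreasing T S) (hTR : ∀ x, T x ∈ Set.range S)
    (hdir : CoincTSDirected T S) {a b : X} (ha : S a = T a) (hb : S b = T b) : S a = S b := by
  obtain ⟨c₀, hac, hbc⟩ := hdir a b ha hb
  obtain ⟨c, rfl, hc⟩ := exists_isTSSeq hTR c₀
  exact tendsto_nhds_unique (h.tendsto_of_coincidence hρ hTS ha hc hac)
    (h.tendsto_of_coincidence hρ hTS hb hc hbc)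

end IsOrderedQuasiContraction

end Coincidence

/-- order-theoretic quasi-contraction corollary with a continuous
half-comparison function (Corollary 3.9, I-regular case). -/
theorem quasicontraction_ordered {X : Type*} [MetricSpace X] [PartialOrder X]
    (E : Set X) (T S : X → X)
    (hTE : ∀ x, T x ∈ E) (hES : E ⊆ Set.range S) (hTS : SIncreasing T S)
    (ρ : ℝ → ℝ) (hρ : IsHalfComparisonFn ρ) (hρc : ContinuousOn ρ (Set.Ici 0))
    (hcontr : ∀ x y, S x ≤ S y →
      dist (T x) (T y) ≤
        ρ (max (dist (S x) (S y)) (max (dist (S x) (T x)) (max (dist (S y) (T y))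
            (max (dist (S x) (T y)) (dist (S y) (T x)))))))
    (hx0 : ∃ x₀, S x₀ ≤ T x₀)
    (hE : OBarComplete E) (hreg : IRegularOn E S) :
    (∃ x, S x = T x) ∧
    (WeaklyCompatible T S → CoincTSDirected T S →
      ∃ z, S z = z ∧ T z = z ∧ (∀ w, S w = w → T w = w → w = z) ∧
      ∀ x : ℕ → X, S (x 0) ≤ T (x 0) → (∀ n, S (x (n + 1)) = T (x n)) →
        Tendsto (fun n => T (x n)) atTop (𝓝 z)) := by
  have h : IsOrderedQuasiContraction T S ρ := hcontr
  have hTR : ∀ x, T x ∈ Set.range S := fun x => hES (hTE x)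
  obtain ⟨x₀, hx₀⟩ := hx0
  obtain ⟨x, rfl, hx⟩ := exists_isTSSeq hTR x₀
  obtain ⟨p, hp, hpp, -⟩ := h.exists_coincidence_of_isTSSeq hTE hES hTS hρ hρc hE hreg hx hx₀
  refine ⟨⟨p, hp⟩, fun hwc hdir => ?_⟩
  obtain ⟨hSz, hTz⟩ := h.fixed_of_coincidence hρ.1 hwc hp hpp
  have huniq : ∀ w, S w = w → T w = w → w = S p := fun w hSw hTw => by
    have := h.S_eq_of_coincTSDirected hρ hTS hTR hdir (hSw.trans hTw.symm) (hSz.trans hTz.symm)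
    rwa [hSw, hSz] at this
  refine ⟨S p, hSz, hTz, huniq, fun y hy₀ hy => ?_⟩
  obtain ⟨q, hq, hqq, hlim⟩ := h.exists_coincidence_of_isTSSeq hTE hES hTS hρ hρc hE hreg hy hy₀
  obtain ⟨hSq, hTq⟩ := h.fixed_of_coincidence hρ.1 hwc hq hqq
  rwa [huniq _ hSq hTq] at hlim
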